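/- For a forest T_v rooted at a hypernode v with S(v) nonempty and all relevant subtree costs positive, the squared coefficient of variation of the SEI estimate satisfies the recursive bound: CV²(|v|·C_SEI(T_v)) + 1 ≤ Σ_{w ∈ H(v)} [ 1 / C(|S(v)|−1, |w|−1) ] · [ r(S(v)) / r(w) ] · ( Cost(T_w) / Cost(T_{S(v)}) )² · ( CV²(|w|·C_SEI(T_w)) + 1 ). (Paper's Theorem 5.) -/

import Mathlib

open Finset

/-- A finite rooted tree on a finite node type `V`.  The root is its own parent,
every non-root node has a parent whose depth is one smaller, and the root is the
unique node of depth `0`. -/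
structure FinRootedTree (V : Type) [Fintype V] [DecidableEq V] where
  root : V
  parent : V → V
  depth : V → ℕ
  depth_root : depth root = 0
  parent_root : parent root = root
  depth_parent : ∀ v, v ≠ root → depth (parent v) + 1 = depth v
  eq_root_of_depth_zero : ∀ v, depth v = 0 → v = root

namespace FinRootedTree

variable {V : Type} [Fintype V] [DecidableEq V]

/-- The set of children of a node. -/
def children (T : FinRootedTree V) (x : V) : Finset V :=
  Finset.univ.filter fun w => w ≠ T.root ∧ T.parent w = x

/-- `S(v)`: the set of all children of nodes of a hypernode `v`. -/
def succs (T : FinRootedTree V) (v : Finset V) : Finset V :=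
  v.biUnion T.children

/-- The set of nodes of the subtree rooted at `x` (the descendants of `x`,
including `x` itself). -/
def desc (T : FinRootedTree V) (x : V) : Finset V :=
  Finset.univ.filter fun w =>
    x ∈ (Finset.range (T.depth w + 1)).image fun k => T.parent^[k] w

/-- `Cost(T_x)`: the total cost of the subtree rooted at `x`. -/
noncomputable def subtreeCost (T : FinRootedTree V) (c : V → ℝ) (x : V) : ℝ :=
  ∑ w ∈ T.desc x, c w

/-- `Cost(T_v)`: the total cost of the forest rooted at the hypernode `v`. -/
noncomputable def forestCost (T : FinRootedTree V) (c : V → ℝ) (v : Finset V) : ℝ :=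
  ∑ x ∈ v, T.subtreeCost c x

/-- `H(v)`: the hyperchildren of `v` for budget `B`, i.e. the subsets of `S(v)`
of size `min B |S(v)|`. -/
def hyper (T : FinRootedTree V) (B : ℕ) (v : Finset V) : Finset (Finset V) :=
  (T.succs v).powersetCard (min B (T.succs v).card)

/-- A hypernode: a nonempty set of distinct nodes, all at the same depth. -/
def IsHypernode (T : FinRootedTree V) (v : Finset V) : Prop :=
  v.Nonempty ∧ ∀ a ∈ v, ∀ b ∈ v, T.depth a = T.depth b

/-- Expectation functional of the SEI estimator `C_SEI(T_v)` (with importance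
function `r`): `seiE T c B r fuel v g` is `E[g(C_SEI(T_v))]`, defined by the
recursion of Algorithm 2, where the hypernode `w` is drawn from `H(v)` with
probability `r(w) / (r(S(v)) * C(|S(v)|-1, |w|-1))`, with enough fuel to reach
the leaves. -/
noncomputable def seiE (T : FinRootedTree V) (c : V → ℝ) (B : ℕ)
    (r : V → ℝ) : ℕ → Finset V → (ℝ → ℝ) → ℝ
  | 0, v, g => g ((∑ x ∈ v, c x) / (v.card : ℝ))
  | fuel + 1, v, g =>
      if T.succs v = ∅ then g ((∑ x ∈ v, c x) / (v.card : ℝ))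
      else
        ∑ w ∈ T.hyper B v,
          ((∑ a ∈ w, r a) /
              ((∑ a ∈ T.succs v, r a) *
                ((((T.succs v).card - 1).choose (w.card - 1) : ℕ) : ℝ))) *
            seiE T c B r fuel w fun y =>
              g ((∑ x ∈ v, c x) / (v.card : ℝ) +
                ((w.card : ℝ) / (v.card : ℝ)) *
                  ((∑ a ∈ T.succs v, r a) / (∑ a ∈ w, r a)) * y)

/-- `Var(|v| * C_SEI(T_v))`. -/
noncomputable def seiVar (T : FinRootedTree V) (c : V → ℝ) (B : ℕ) (r : V → ℝ)
    (fuel : ℕ) (v : Finset V) : ℝ :=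
  seiE T c B r fuel v (fun y => ((v.card : ℝ) * y) ^ 2) -
    (seiE T c B r fuel v fun y => (v.card : ℝ) * y) ^ 2

/-- `CV²(|v| * C_SEI(T_v)) = Var(|v| * C_SEI(T_v)) / E[|v| * C_SEI(T_v)]²`. -/
noncomputable def seiCV2 (T : FinRootedTree V) (c : V → ℝ) (B : ℕ) (r : V → ℝ)
    (fuel : ℕ) (v : Finset V) : ℝ :=
  seiVar T c B r fuel v /
    (seiE T c B r fuel v fun y => (v.card : ℝ) * y) ^ 2

/-!
Write `X = |v|·C_SEI(T_v)` and `a = c(v)`. The estimator is unbiased, so `E[X] = a + s` with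
`s = Cost(T_{S(v)})`, and `E[X - a] = s`. Unfolding one step of the recursion,
`E[(X - a)²] = ∑_w (1/C(|S(v)|-1, |w|-1))·(r(S(v))/r(w))·E[(|w|·C_SEI(T_w))²]`, which is `s²` times
the right-hand side. The bound thus reads `E[X²]/E[X]² ≤ E[(X - a)²]/E[X - a]²`: removing the
nonnegative constant `a` can only raise the normalised second moment, because
`E[X - a]² ≤ E[(X - a)²]` by Jensen's inequality.
-/

section Tree

variable (T : FinRootedTree V)

theorem mem_children {x y : V} : y ∈ T.children x ↔ y ≠ T.root ∧ T.parent y = x := by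
  simp [children]

theorem depth_of_mem_children {x y : V} (hy : y ∈ T.children x) :
    T.depth y = T.depth x + 1 := by
  obtain ⟨hroot, rfl⟩ := T.mem_children.1 hy
  exact (T.depth_parent y hroot).symm

theorem depth_parent_iterate (x : V) {k : ℕ} (hk : k ≤ T.depth x) :
    T.depth (T.parent^[k] x) = T.depth x - k := by
  induction k with
  | zero => rfl
  | succ k ih =>
    have hk' := ih (by omega)
    have hroot : T.parent^[k] x ≠ T.root := fun h => by
      rw [h, T.depth_root] at hk'
      omega
    have := T.depth_parent _ hroot
    rw [Function.iterate_succ_apply']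
    omega

theorem depth_lt_card (x : V) : T.depth x < Fintype.card V := by
  have hinj : Set.InjOn (fun k => T.parent^[k] x) (range (T.depth x + 1)) := by
    intro k hk l hl hkl
    simp only [coe_range, Set.mem_Iio] at hk hl
    have := T.depth_parent_iterate x (k := k) (by omega)
    have := T.depth_parent_iterate x (k := l) (by omega)
    simp only at hkl
    rw [hkl] at *
    omega
  simpa using card_le_card_of_injOn _ (fun k _ => mem_univ (T.parent^[k] x)) hinj

theorem mem_desc {x w : V} : w ∈ T.desc x ↔ ∃ k ≤ T.depth w, T.parent^[k] w = x := by
  simp [desc, eq_comm]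

theorem depth_le_of_mem_desc {x w : V} (hw : w ∈ T.desc x) : T.depth x ≤ T.depth w := by
  obtain ⟨k, hk, rfl⟩ := T.mem_desc.1 hw
  rw [T.depth_parent_iterate w hk]
  omega

theorem eq_of_mem_desc_of_depth_eq {x y w : V} (hx : w ∈ T.desc x) (hy : w ∈ T.desc y)
    (hxy : T.depth x = T.depth y) : x = y := by
  obtain ⟨k, hk, rfl⟩ := T.mem_desc.1 hx
  obtain ⟨l, hl, rfl⟩ := T.mem_desc.1 hy
  have := T.depth_parent_iterate w hk
  have := T.depth_parent_iterate w hl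
  obtain rfl : k = l := by omega
  rfl

theorem desc_eq_insert_biUnion (x : V) :
    T.desc x = insert x ((T.children x).biUnion T.desc) := by
  ext w
  simp only [mem_insert, mem_biUnion, mem_desc, mem_children]
  constructor
  · rintro ⟨_ | k, hk, rfl⟩
    · exact .inl rfl
    refine .inr ⟨T.parent^[k] w, ⟨fun h => ?_, (Function.iterate_succ_apply' ..).symm⟩,
      k, by omega, rfl⟩
    have := T.depth_parent_iterate w (k := k) (by omega)
    rw [h, T.depth_root] at this
    omega
  · rintro (rfl | ⟨y, ⟨hroot, rfl⟩, k, hk, rfl⟩)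
    · exact ⟨0, Nat.zero_le _, rfl⟩
    refine ⟨k + 1, ?_, Function.iterate_succ_apply' ..⟩
    have := T.depth_parent_iterate w hk
    have := T.depth_parent _ hroot
    omega

theorem subtreeCost_eq_add (c : V → ℝ) (x : V) :
    T.subtreeCost c x = c x + ∑ y ∈ T.children x, T.subtreeCost c y := by
  have hx : x ∉ (T.children x).biUnion T.desc := by
    simp only [mem_biUnion, not_exists, not_and]
    intro y hy hxy
    have := T.depth_le_of_mem_desc hxy
    have := T.depth_of_mem_children hy
    omega
  have hdisj : Set.PairwiseDisjoint ↑(T.children x) T.desc :=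
    fun y hy z hz hyz => disjoint_left.2 fun w hwy hwz => hyz <|
      T.eq_of_mem_desc_of_depth_eq hwy hwz <| by
        rw [T.depth_of_mem_children hy, T.depth_of_mem_children hz]
  rw [subtreeCost, desc_eq_insert_biUnion, sum_insert hx, sum_biUnion hdisj]
  rfl

theorem children_pairwiseDisjoint (v : Finset V) : Set.PairwiseDisjoint ↑v T.children :=
  fun _ _ _ _ hxy => disjoint_left.2 fun _ hzx hzy =>
    hxy <| (T.mem_children.1 hzx).2.symm.trans (T.mem_children.1 hzy).2

theorem forestCost_eq_add (c : V → ℝ) (v : Finset V) :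
    T.forestCost c v = ∑ x ∈ v, c x + T.forestCost c (T.succs v) := by
  rw [forestCost, forestCost, succs, sum_biUnion (T.children_pairwiseDisjoint v),
    ← sum_add_distrib]
  exact sum_congr rfl fun x _ => T.subtreeCost_eq_add c x

theorem nonempty_of_succs_ne_empty {v : Finset V} (hS : T.succs v ≠ ∅) : v.Nonempty :=
  nonempty_iff_ne_empty.2 fun hv => hS (by simp [hv, succs])

theorem succs_mono : Monotone T.succs :=
  fun _ _ h => biUnion_subset_biUnion_of_subset_left _ h

theorem le_depth_of_mem_iterate_succs {v : Finset V} {n : ℕ} {y : V}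
    (hy : y ∈ T.succs^[n] v) : n ≤ T.depth y := by
  induction n generalizing y with
  | zero => exact Nat.zero_le _
  | succ n ih =>
    rw [Function.iterate_succ_apply', succs, mem_biUnion] at hy
    obtain ⟨x, hx, hyx⟩ := hy
    have := ih hx
    have := T.depth_of_mem_children hyx
    omega

theorem iterate_succs_card_eq_empty (v : Finset V) : T.succs^[Fintype.card V] v = ∅ :=
  eq_empty_of_forall_notMem fun y hy =>
    (T.le_depth_of_mem_iterate_succs hy).not_gt (T.depth_lt_card y)

theorem iterate_succs_eq_empty_of_subset {v w : Finset V} {n : ℕ} (hw : w ⊆ T.succs v)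
    (hv : T.succs^[n + 1] v = ∅) : T.succs^[n] w = ∅ :=
  subset_empty.1 <| hv ▸ Function.iterate_succ_apply T.succs n v ▸ T.succs_mono.iterate n hw

end Tree

theorem sum_powersetCard_sum {α M : Type*} [DecidableEq α] [AddCommMonoid M] (s : Finset α)
    (f : α → M) {k : ℕ} (hk : 1 ≤ k) :
    ∑ w ∈ s.powersetCard k, ∑ a ∈ w, f a = (#s - 1).choose (k - 1) • ∑ a ∈ s, f a := by
  rw [sum_comm' (t' := s) (s' := fun a => (s.powersetCard k).filter ({a} ⊆ ·)), smul_sum]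
  · refine sum_congr rfl fun a ha => ?_
    rw [sum_const, card_filter_powersetCard_subset {a} s k (by simpa) (by simpa), card_singleton]
  · intro w a
    simp only [mem_powersetCard, mem_filter, singleton_subset_iff]
    exact ⟨fun h => ⟨⟨h.1, h.2⟩, h.1.1 h.2⟩, fun h => ⟨h.1.1, h.1.2⟩⟩

theorem mul_div_add_div_mul_eq {n : ℝ} (hn : n ≠ 0) (a m ρ y : ℝ) :
    n * (a / n + m / n * ρ * y) = a + ρ * (m * y) := by
  field_simp

section Estimator

variable {T : FinRootedTree V} {c : V → ℝ} {B : ℕ} {r : V → ℝ} {v w : Finset V}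

/-- The probability `P(w)` with which `w ∈ H(v)` is drawn. -/
noncomputable def selectionProb (T : FinRootedTree V) (r : V → ℝ) (v w : Finset V) : ℝ :=
  (∑ a ∈ w, r a) /
    ((∑ a ∈ T.succs v, r a) * ((((T.succs v).card - 1).choose (w.card - 1) : ℕ) : ℝ))

theorem seiE_succ (n : ℕ) (v : Finset V) (g : ℝ → ℝ) :
    seiE T c B r (n + 1) v g =
      if T.succs v = ∅ then g ((∑ x ∈ v, c x) / (v.card : ℝ))
      else
        ∑ w ∈ T.hyper B v, T.selectionProb r v w *
          seiE T c B r n w fun y =>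
            g ((∑ x ∈ v, c x) / (v.card : ℝ) +
              ((w.card : ℝ) / (v.card : ℝ)) * ((∑ a ∈ T.succs v, r a) / (∑ a ∈ w, r a)) * y) :=
  rfl

theorem seiE_add (n : ℕ) (v : Finset V) (g h : ℝ → ℝ) :
    seiE T c B r n v (fun y => g y + h y) = seiE T c B r n v g + seiE T c B r n v h := by
  induction n generalizing v g h with
  | zero => rfl
  | succ n ih =>
    simp only [seiE_succ]
    split_ifs
    · rfl
    · simp only [ih, mul_add, sum_add_distrib]

theorem seiE_const_mul (n : ℕ) (v : Finset V) (b : ℝ) (g : ℝ → ℝ) :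
    seiE T c B r n v (fun y => b * g y) = b * seiE T c B r n v g := by
  induction n generalizing v g with
  | zero => rfl
  | succ n ih =>
    simp only [seiE_succ]
    split_ifs
    · rfl
    · simp only [ih, mul_sum, mul_left_comm]

theorem mem_hyper (hw : w ∈ T.hyper B v) : w ⊆ T.succs v ∧ #w = min B #(T.succs v) :=
  mem_powersetCard.1 hw

theorem nonempty_of_mem_hyper (hB : 1 ≤ B) (hS : T.succs v ≠ ∅) (hw : w ∈ T.hyper B v) :
    w.Nonempty := by
  rw [← card_pos, (mem_hyper hw).2]
  exact lt_min hB (card_pos.2 (nonempty_of_ne_empty hS))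

theorem sum_hyper_sum (hB : 1 ≤ B) (hS : T.succs v ≠ ∅) (f : V → ℝ) :
    ∑ w ∈ T.hyper B v, ∑ a ∈ w, f a =
      ((#(T.succs v) - 1).choose (min B #(T.succs v) - 1) : ℕ) * ∑ a ∈ T.succs v, f a := by
  rw [hyper, sum_powersetCard_sum _ _ (le_min hB (card_pos.2 (nonempty_of_ne_empty hS))),
    nsmul_eq_mul]

theorem choose_hyper_pos (hS : T.succs v ≠ ∅) :
    (0 : ℝ) < ((#(T.succs v) - 1).choose (min B #(T.succs v) - 1) : ℕ) := by
  have := card_pos.2 (nonempty_of_ne_empty hS)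
  exact_mod_cast Nat.choose_pos (by omega)

theorem selectionProb_nonneg (hr : ∀ x, 0 ≤ r x) : 0 ≤ T.selectionProb r v w :=
  div_nonneg (sum_nonneg fun a _ => hr a)
    (mul_nonneg (sum_nonneg fun a _ => hr a) (Nat.cast_nonneg _))

theorem sum_selectionProb (hB : 1 ≤ B) (hr : ∀ x, 0 < r x) (hS : T.succs v ≠ ∅) :
    ∑ w ∈ T.hyper B v, T.selectionProb r v w = 1 := by
  have hrS : 0 < ∑ a ∈ T.succs v, r a := sum_pos (fun a _ => hr a) (nonempty_of_ne_empty hS)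
  have hC := choose_hyper_pos (B := B) hS
  rw [sum_congr rfl fun w hw => by rw [selectionProb, (mem_hyper hw).2], ← sum_div,
    sum_hyper_sum hB hS, div_eq_one_iff_eq (by positivity), mul_comm]

theorem selectionProb_mul_ratio (hr : ∀ x, 0 < r x) (hS : T.succs v ≠ ∅) (hw : w.Nonempty) :
    T.selectionProb r v w * ((∑ a ∈ T.succs v, r a) / (∑ a ∈ w, r a)) =
      1 / (((#(T.succs v) - 1).choose (#w - 1) : ℕ) : ℝ) := by
  have hrS : 0 < ∑ a ∈ T.succs v, r a := sum_pos (fun a _ => hr a) (nonempty_of_ne_empty hS)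
  have hrw : 0 < ∑ a ∈ w, r a := sum_pos (fun a _ => hr a) hw
  rw [selectionProb]
  field_simp

theorem seiE_const (hB : 1 ≤ B) (hr : ∀ x, 0 < r x) (n : ℕ) (v : Finset V) (b : ℝ) :
    seiE T c B r n v (fun _ => b) = b := by
  induction n generalizing v with
  | zero => rfl
  | succ n ih =>
    rw [seiE_succ]
    split_ifs with hS
    · rfl
    · simp only [ih, ← sum_mul, sum_selectionProb hB hr hS, one_mul]

theorem seiE_sub_const (hB : 1 ≤ B) (hr : ∀ x, 0 < r x) (n : ℕ) (v : Finset V) (g : ℝ → ℝ)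
    (b : ℝ) : seiE T c B r n v (fun y => g y - b) = seiE T c B r n v g - b := by
  simp only [sub_eq_add_neg, seiE_add, seiE_const hB hr]

theorem seiE_sq_eq (hB : 1 ≤ B) (hr : ∀ x, 0 < r x) (n : ℕ) (v : Finset V) (g : ℝ → ℝ)
    (b : ℝ) : seiE T c B r n v (fun y => g y ^ 2) =
      seiE T c B r n v (fun y => (g y - b) ^ 2) + 2 * b * seiE T c B r n v g - b ^ 2 := by
  have hg : (fun y => g y ^ 2) = fun y => (g y - b) ^ 2 + (2 * b * g y + -b ^ 2) := by
    funext y; ring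
  rw [hg, seiE_add, seiE_add, seiE_const_mul, seiE_const hB hr]
  ring

theorem sq_seiE_le (hB : 1 ≤ B) (hr : ∀ x, 0 < r x) (n : ℕ) (v : Finset V) (g : ℝ → ℝ) :
    seiE T c B r n v g ^ 2 ≤ seiE T c B r n v (fun y => g y ^ 2) := by
  induction n generalizing v g with
  | zero => rfl
  | succ n ih =>
    simp only [seiE_succ]
    split_ifs with hS
    · rfl
    calc (∑ w ∈ T.hyper B v, T.selectionProb r v w * seiE T c B r n w _) ^ 2
        ≤ ∑ w ∈ T.hyper B v, T.selectionProb r v w * seiE T c B r n w _ ^ 2 :=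
          (even_two.convexOn_pow (𝕜 := ℝ)).map_sum_le
            (fun _ _ => selectionProb_nonneg fun x => (hr x).le)
            (sum_selectionProb hB hr hS) fun _ _ => Set.mem_univ _
      _ ≤ _ := sum_le_sum fun w _ =>
          mul_le_mul_of_nonneg_left (ih w _) (selectionProb_nonneg fun x => (hr x).le)

theorem seiE_succ_eq_self (n : ℕ) (v : Finset V) (h : T.succs^[n + 1] v = ∅) (g : ℝ → ℝ) :
    seiE T c B r (n + 1) v g = seiE T c B r n v g := by
  induction n generalizing v g with
  | zero => rw [seiE_succ, if_pos (Function.iterate_one T.succs ▸ h)]; rfl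
  | succ n ih =>
    rw [seiE_succ, seiE_succ]
    split_ifs
    · rfl
    exact sum_congr rfl fun w hw =>
      congrArg _ (ih w (T.iterate_succs_eq_empty_of_subset (mem_hyper hw).1 h) _)

theorem seiE_eq_sum_hyper (hS : T.succs v ≠ ∅) (g : ℝ → ℝ) :
    seiE T c B r (Fintype.card V) v g =
      ∑ w ∈ T.hyper B v, T.selectionProb r v w *
        seiE T c B r (Fintype.card V) w fun y =>
          g ((∑ x ∈ v, c x) / (v.card : ℝ) +
            ((w.card : ℝ) / (v.card : ℝ)) * ((∑ a ∈ T.succs v, r a) / (∑ a ∈ w, r a)) * y) := by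
  obtain ⟨n, hn⟩ : ∃ n, Fintype.card V = n + 1 :=
    Nat.exists_eq_add_one.2 (Fintype.card_pos_iff.2 ⟨T.root⟩)
  rw [hn, seiE_succ, if_neg hS]
  refine sum_congr rfl fun w _ => ?_
  rw [seiE_succ_eq_self n w (hn ▸ T.iterate_succs_card_eq_empty w)]

theorem seiE_card_mul_eq_forestCost (hB : 1 ≤ B) (hr : ∀ x, 0 < r x) {n : ℕ}
    (hn : T.succs^[n] v = ∅) (hv : v.Nonempty) :
    seiE T c B r n v (fun y => (v.card : ℝ) * y) = T.forestCost c v := by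
  induction n generalizing v with
  | zero => exact absurd hn hv.ne_empty
  | succ n ih =>
    have hv0 : (v.card : ℝ) ≠ 0 := Nat.cast_ne_zero.2 hv.card_pos.ne'
    rw [seiE_succ, T.forestCost_eq_add]
    split_ifs with hS
    · simp [hS, forestCost, mul_div_cancel₀ _ hv0]
    have hC := choose_hyper_pos (B := B) hS
    simp only [mul_div_add_div_mul_eq hv0]
    calc _ = ∑ w ∈ T.hyper B v, (T.selectionProb r v w * ∑ x ∈ v, c x +
          1 / (((#(T.succs v) - 1).choose (min B #(T.succs v) - 1) : ℕ) : ℝ) *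
            ∑ x ∈ w, T.subtreeCost c x) := sum_congr rfl fun w hw => ?_
      _ = _ := by
        rw [sum_add_distrib, ← sum_mul, sum_selectionProb hB hr hS, ← mul_sum,
          sum_hyper_sum hB hS]
        field_simp
        rfl
    have hwne := nonempty_of_mem_hyper hB hS hw
    rw [seiE_add, seiE_const hB hr, seiE_const_mul,
      ih (T.iterate_succs_eq_empty_of_subset (mem_hyper hw).1 hn) hwne, mul_add, ← mul_assoc,
      selectionProb_mul_ratio hr hS hwne, (mem_hyper hw).2]
    rfl

theorem seiCV2_add_one {n : ℕ} (h : seiE T c B r n v (fun y => (v.card : ℝ) * y) ≠ 0) :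
    seiCV2 T c B r n v + 1 =
      seiE T c B r n v (fun y => ((v.card : ℝ) * y) ^ 2) /
        seiE T c B r n v (fun y => (v.card : ℝ) * y) ^ 2 := by
  rw [seiCV2, seiVar, div_add_one (pow_ne_zero 2 h), sub_add_cancel]

theorem seiE_sq_card_mul_eq (hB : 1 ≤ B) (hr : ∀ x, 0 < r x)
    (hpos : ∀ x, 0 < T.subtreeCost c x) (hv : v.Nonempty) :
    seiE T c B r (Fintype.card V) v (fun y => ((v.card : ℝ) * y) ^ 2) =
      T.forestCost c v ^ 2 * (seiCV2 T c B r (Fintype.card V) v + 1) := by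
  have hmean := seiE_card_mul_eq_forestCost (c := c) hB hr (T.iterate_succs_card_eq_empty v) hv
  have hcost : 0 < T.forestCost c v := sum_pos (fun x _ => hpos x) hv
  rw [seiCV2_add_one (hmean ▸ hcost.ne'), hmean]
  field_simp

theorem seiE_sq_sub_eq_sum (hB : 1 ≤ B) (hr : ∀ x, 0 < r x) (hS : T.succs v ≠ ∅) :
    seiE T c B r (Fintype.card V) v (fun y => ((v.card : ℝ) * y - ∑ x ∈ v, c x) ^ 2) =
      ∑ w ∈ T.hyper B v,
        1 / ((((T.succs v).card - 1).choose (w.card - 1) : ℕ) : ℝ) *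
          ((∑ a ∈ T.succs v, r a) / (∑ a ∈ w, r a)) *
          seiE T c B r (Fintype.card V) w (fun y => ((w.card : ℝ) * y) ^ 2) := by
  have hv0 : (v.card : ℝ) ≠ 0 :=
    Nat.cast_ne_zero.2 (T.nonempty_of_succs_ne_empty hS).card_pos.ne'
  rw [seiE_eq_sum_hyper hS]
  simp only [mul_div_add_div_mul_eq hv0, add_sub_cancel_left]
  refine sum_congr rfl fun w hw => ?_
  simp only [mul_pow ((∑ a ∈ T.succs v, r a) / ∑ a ∈ w, r a) ((w.card : ℝ) * _), seiE_const_mul,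
    ← selectionProb_mul_ratio hr hS (nonempty_of_mem_hyper hB hS hw)]
  ring

end Estimator

-- Shifting a quantity with mean `s > 0` and second moment `Q` by a constant `a ≥ 0`
-- lowers the ratio of second moment to squared mean.
theorem add_sq_div_add_sq_le {a s Q : ℝ} (ha : 0 ≤ a) (hs : 0 < s) (hQ : s ^ 2 ≤ Q) :
    (Q + a * (a + 2 * s)) / (a + s) ^ 2 ≤ Q / s ^ 2 := by
  rw [div_le_div_iff₀ (by positivity) (by positivity)]
  nlinarith [mul_nonneg (sub_nonneg.2 hQ) (mul_nonneg ha (by positivity : 0 ≤ a + 2 * s))]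

theorem sei_cv2_bound_general (T : FinRootedTree V) (c : V → ℝ) (hc : ∀ x, 0 ≤ c x)
    (hpos : ∀ x : V, 0 < T.subtreeCost c x)
    (B : ℕ) (hB : 1 ≤ B) (r : V → ℝ) (hr : ∀ x : V, 0 < r x)
    (v : Finset V) (hS : T.succs v ≠ ∅) :
    seiCV2 T c B r (Fintype.card V) v + 1 ≤
      ∑ w ∈ T.hyper B v,
        (1 / ((((T.succs v).card - 1).choose (w.card - 1) : ℕ) : ℝ)) *
          ((∑ a ∈ T.succs v, r a) / (∑ a ∈ w, r a)) *
          (T.forestCost c w / T.forestCost c (T.succs v)) ^ 2 *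
          (seiCV2 T c B r (Fintype.card V) w + 1) := by
  set a := ∑ x ∈ v, c x
  set s := T.forestCost c (T.succs v)
  set X : ℝ → ℝ := fun y => (v.card : ℝ) * y
  have ha : 0 ≤ a := sum_nonneg fun x _ => hc x
  have hs : 0 < s := sum_pos (fun x _ => hpos x) (nonempty_of_ne_empty hS)
  have hmean : seiE T c B r (Fintype.card V) v X = a + s := by
    rw [seiE_card_mul_eq_forestCost hB hr (T.iterate_succs_card_eq_empty v)
      (T.nonempty_of_succs_ne_empty hS), forestCost_eq_add]
  have hjensen : s ^ 2 ≤ seiE T c B r (Fintype.card V) v (fun y => (X y - a) ^ 2) := by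
    have := sq_seiE_le (T := T) (c := c) hB hr (Fintype.card V) v (fun y => X y - a)
    rwa [seiE_sub_const hB hr, hmean, add_sub_cancel_left] at this
  rw [seiCV2_add_one (by rw [hmean]; positivity), seiE_sq_eq hB hr _ v X a, hmean]
  calc _ ≤ seiE T c B r (Fintype.card V) v (fun y => (X y - a) ^ 2) / s ^ 2 := by
        convert add_sq_div_add_sq_le ha hs hjensen using 2
        ring
    _ = _ := by
        rw [seiE_sq_sub_eq_sum hB hr hS, sum_div]
        refine sum_congr rfl fun w hw => ?_
        rw [seiE_sq_card_mul_eq hB hr hpos (nonempty_of_mem_hyper hB hS hw)]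
        field_simp

/-- Paper's Theorem 5: the squared coefficient of variation of the SEI estimate
satisfies the recursive bound
`CV²(|v|·C_SEI(T_v)) + 1 ≤ ∑_{w ∈ H(v)} (1/C(|S(v)|-1,|w|-1)) · (r(S(v))/r(w)) ·
(Cost(T_w)/Cost(T_{S(v)}))² · (CV²(|w|·C_SEI(T_w)) + 1)`. -/
theorem sei_cv2_bound (T : FinRootedTree V) (c : V → ℝ) (hc : ∀ x, 0 ≤ c x)
    (hpos : ∀ x : V, 0 < T.subtreeCost c x)
    (B : ℕ) (hB : 1 ≤ B) (r : V → ℝ) (hr : ∀ x : V, 0 < r x)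
    (v : Finset V) (hv : T.IsHypernode v) (hS : T.succs v ≠ ∅) :
    seiCV2 T c B r (Fintype.card V) v + 1 ≤
      ∑ w ∈ T.hyper B v,
        (1 / ((((T.succs v).card - 1).choose (w.card - 1) : ℕ) : ℝ)) *
          ((∑ a ∈ T.succs v, r a) / (∑ a ∈ w, r a)) *
          (T.forestCost c w / T.forestCost c (T.succs v)) ^ 2 *
          (seiCV2 T c B r (Fintype.card V) w + 1) :=
  sei_cv2_bound_general T c hc hpos B hB r hr v hS

end FinRootedTree
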